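/- arXiv:0806.0735 — 8 statements merged into one kernel-verified Lean document; each statement's English description precedes it below -/
import Mathlib

section
/- Let F be a real (1,1)-form on a complex manifold. If ∂∂̄F = 0 and ∂∂̄(F^2) = 0, then ∂F ∧ ∂̄F = 0, and consequently ∂∂̄(F^k) = 0 for every integer k ≥ 1. -/
/-!
STATEMENT 1. Let `F` be a real (1,1)-form on a complex manifold. If `∂∂̄F = 0` and
`∂∂̄(F²) = 0`, then `∂F ∧ ∂̄F = 0`, and consequently `∂∂̄(F^k) = 0` for every `k ≥ 1`.

Same abstract model as in Statement 0: `A` is the algebra of forms, `E`/`O` the even/odd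
forms (even forms are central, odd forms anticommute with each other), `p = ∂`, `q = ∂̄`
are antiderivations, `F ∈ E` is the fundamental 2-form with `∂F, ∂̄F ∈ O`.
-/
theorem statement1
    {A : Type*} [Ring A] [Algebra ℂ A]
    (E O : Submodule ℂ A)
    (hone : (1 : A) ∈ E)
    (hEmul : ∀ x ∈ E, ∀ y ∈ E, x * y ∈ E)
    (hEcomm : ∀ x ∈ E, ∀ y : A, x * y = y * x)
    (hOanti : ∀ x ∈ O, ∀ y ∈ O, x * y = -(y * x))
    (p q : A →ₗ[ℂ] A)   -- `p = ∂`, `q = ∂̄`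
    (hpE : ∀ x ∈ E, ∀ y : A, p (x * y) = p x * y + x * p y)
    (hqE : ∀ x ∈ E, ∀ y : A, q (x * y) = q x * y + x * q y)
    (hpO : ∀ x ∈ O, ∀ y : A, p (x * y) = p x * y - x * p y)
    (hqO : ∀ x ∈ O, ∀ y : A, q (x * y) = q x * y - x * q y)
    (F : A) (hF : F ∈ E) (hpF : p F ∈ O) (hqF : q F ∈ O)
    (h1 : p (q F) = 0) (h2 : p (q (F ^ 2)) = 0) :
    p F * q F = 0 ∧ ∀ k : ℕ, 1 ≤ k → p (q (F ^ k)) = 0 := by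
  have hEpow : ∀ n : ℕ, F ^ n ∈ E := by
    intro n
    induction n with
    | zero => simpa using hone
    | succ n ih => rw [pow_succ]; exact hEmul _ ih _ hF
  have hp1 : p 1 = 0 := by
    have h := hpE 1 hone 1
    simp only [one_mul, mul_one] at h
    have h' : p 1 + 0 = p 1 + p 1 := by simpa using h
    exact (add_left_cancel h').symm
  -- q (F^(n+1)) = (n+1) • (F^n * q F)
  have dq : ∀ n : ℕ, q (F ^ (n + 1)) = (n + 1 : ℕ) • (F ^ n * q F) := by
    intro n
    induction n with
    | zero => simp
    | succ n ih =>
      rw [pow_succ', hqE F hF, ih, ← hEcomm _ (hEpow (n + 1)) (q F), mul_smul_comm,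
        ← mul_assoc, ← pow_succ', succ_nsmul (F ^ (n + 1) * q F) (n + 1)]
      abel
  -- same for p
  have dp : ∀ n : ℕ, p (F ^ (n + 1)) = (n + 1 : ℕ) • (F ^ n * p F) := by
    intro n
    induction n with
    | zero => simp
    | succ n ih =>
      rw [pow_succ', hpE F hF, ih, ← hEcomm _ (hEpow (n + 1)) (p F), mul_smul_comm,
        ← mul_assoc, ← pow_succ', succ_nsmul (F ^ (n + 1) * p F) (n + 1)]
      abel
  have key : p F * q F = 0 := by
    have e2 : q (F ^ 2) = (2 : ℕ) • (F * q F) := by simpa using dq 1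
    have : p (q (F ^ 2)) = (2 : ℕ) • (p F * q F) := by
      rw [e2, map_nsmul, hpE F hF, h1, mul_zero, add_zero]
    rw [h2] at this
    have h2' : ((2 : ℂ)) • (p F * q F) = 0 := by
      rw [← Nat.cast_smul_eq_nsmul ℂ 2 (p F * q F)] at this
      exact_mod_cast this.symm
    rcases smul_eq_zero.mp h2' with h | h
    · exact absurd h (by norm_num)
    · exact h
  refine ⟨key, ?_⟩
  intro k hk
  obtain ⟨n, rfl⟩ := Nat.exists_eq_add_of_le hk
  rw [add_comm 1 n, dq n, map_nsmul]
  rcases n with _ | m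
  · simpa using h1
  · rw [hpE _ (hEpow (m + 1)), h1, mul_zero, add_zero, dp m,
      smul_mul_assoc, mul_assoc, key, mul_zero, smul_zero, smul_zero]
end

section
/- On a Hermitian manifold of complex dimension 4, if the fundamental 2-form F satisfies ∂∂̄F = 0 (strong KT) and ∂∂̄F^2 = 0 (astheno-Kähler), then ∂∂̄F^3 = 0 (i.e. the metric is standard). -/
/-!
STATEMENT 2. On a Hermitian manifold of complex dimension 4, if the fundamental 2-form `F`
satisfies `∂∂̄F = 0` (strong KT) and `∂∂̄F² = 0` (astheno-Kähler), then `∂∂̄F³ = 0`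
(the metric is standard).

Same abstract model of the algebra of forms on the complex manifold as in Statement 0:
`E`/`O` are the even/odd forms, `p = ∂`, `q = ∂̄` are antiderivations, `F ∈ E` is the
fundamental 2-form (on a complex 4-manifold `F³` is the `(3,3)`-power occurring in the
standard condition).
-/
theorem statement2
    {A : Type*} [Ring A] [Algebra ℂ A]
    (E O : Submodule ℂ A)
    (hone : (1 : A) ∈ E)
    (hEmul : ∀ x ∈ E, ∀ y ∈ E, x * y ∈ E)
    (hEcomm : ∀ x ∈ E, ∀ y : A, x * y = y * x)
    (hOanti : ∀ x ∈ O, ∀ y ∈ O, x * y = -(y * x))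
    (p q : A →ₗ[ℂ] A)   -- `p = ∂`, `q = ∂̄`
    (hpE : ∀ x ∈ E, ∀ y : A, p (x * y) = p x * y + x * p y)
    (hqE : ∀ x ∈ E, ∀ y : A, q (x * y) = q x * y + x * q y)
    (hpO : ∀ x ∈ O, ∀ y : A, p (x * y) = p x * y - x * p y)
    (hqO : ∀ x ∈ O, ∀ y : A, q (x * y) = q x * y - x * q y)
    (F : A) (hF : F ∈ E) (hpF : p F ∈ O) (hqF : q F ∈ O)
    (hSKT : p (q F) = 0) (hAK : p (q (F ^ 2)) = 0) :
    p (q (F ^ 3)) = 0 := by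
  have hF2 : F ^ 2 ∈ E := by rw [sq]; exact hEmul F hF F hF
  have hq2 : q (F ^ 2) = q F * F + F * q F := by rw [sq, hqE F hF F]
  have hK2 : p F * q F + p F * q F = 0 := by
    have h := hAK
    rw [hq2, map_add, hpO (q F) hqF F, hSKT, zero_mul, zero_sub,
      hpE F hF (q F), hSKT, mul_zero, add_zero,
      hOanti (q F) hqF (p F) hpF, neg_neg] at h
    exact h
  have hK : p F * q F = 0 := by
    have h2 : (2 : ℂ) • (p F * q F) = 0 := by rw [two_smul]; exact hK2
    simpa using smul_eq_zero.mp h2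
  have hp2q : p (F ^ 2 * q F) = 0 := by
    rw [hpE (F ^ 2) hF2 (q F), hSKT, mul_zero, add_zero, sq, hpE F hF F,
      ← hEcomm F hF (p F), add_mul, mul_assoc F (p F) (q F), hK, mul_zero, add_zero]
  have hq3 : q (F ^ 3) = q (F ^ 2) * F + F ^ 2 * q F := by
    rw [pow_succ, hqE (F ^ 2) hF2 F]
  have e : q (F ^ 2) * F = F ^ 2 * q F + F ^ 2 * q F := by
    rw [hq2, ← hEcomm F hF (q F), add_mul, mul_assoc, ← hEcomm F hF (q F),
      ← mul_assoc, ← sq]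
  rw [hq3, map_add, hp2q, add_zero, e, map_add, hp2q, add_zero]
end

section
/- Let η^1, η^2, η^3, η^4 be complex (1,0)-forms with dη^j = 0 for j = 1,2,3 and dη^4 = a_1 η^{12} + a_2 η^{13} + a_3 η^{1 1̄} + a_4 η^{1 2̄} + a_5 η^{1 3̄} + a_6 η^{23} + a_7 η^{2 1̄} + a_8 η^{2 2̄} + a_9 η^{2 3̄} + a_{10} η^{3 1̄} + a_{11} η^{3 2̄} + a_{12} η^{3 3̄}, with a_j ∈ ℂ. Let F = (i/2) Σ_{j=1}^4 η^j ∧ η̄^j. Then ∂∂̄(F^2) = 0 if and only if |a_1|^2 + |a_2|^2 + |a_4|^2 + |a_5|^2 + |a_6|^2 + |a_7|^2 + |a_9|^2 + |a_{10}|^2 + |a_{11}|^2 = 2 Re(a_3 ā_8 + a_3 ā_{12} + a_8 ā_{12}). -/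
set_option maxHeartbeats 2000000
set_option maxRecDepth 40000

open Complex in
/-!
STATEMENT 4. For the 8-dimensional 2-step nilpotent Lie algebra with `(1,0)`-forms
`η¹,…,η⁴` satisfying `dηʲ = 0` (j = 1,2,3) and
`dη⁴ = a₁η¹² + a₂η¹³ + a₃η^{11̄} + a₄η^{12̄} + a₅η^{13̄} + a₆η²³ + a₇η^{21̄} + a₈η^{22̄}
      + a₉η^{23̄} + a₁₀η^{31̄} + a₁₁η^{32̄} + a₁₂η^{33̄}`,
the fundamental form `F = (i/2)Σ ηʲ∧η̄ʲ` of the diagonal metric satisfies `∂∂̄(F²) = 0`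
iff `|a₁|²+|a₂|²+|a₄|²+|a₅|²+|a₆|²+|a₇|²+|a₉|²+|a₁₀|²+|a₁₁|² = 2Re(a₃ā₈+a₃ā₁₂+a₈ā₁₂)`.

The Chevalley–Eilenberg complex is modelled by the exterior algebra on 8 generators
`g 0,…,g 3 = η¹,…,η⁴` and `g 4,…,g 7 = η̄¹,…,η̄⁴`.  The operators `p = ∂` and `q = ∂̄`
are ℂ-linear antiderivations (Leibniz rule on generators) whose values on the generators
are the bidegree `(·,·)`-components of `d` determined by the structure equations
(`∂η⁴` is the (2,0)-part, `∂̄η⁴` the (1,1)-part of `dη⁴`, and `∂η̄⁴`, `∂̄η̄⁴` are the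
(1,1)- and (0,2)-parts of `dη̄⁴ = conj(dη⁴)`).
-/
theorem statement4
    (a₁ a₂ a₃ a₄ a₅ a₆ a₇ a₈ a₉ a₁₀ a₁₁ a₁₂ : ℂ)
    (g : Fin 8 → ExteriorAlgebra ℂ (Fin 8 → ℂ))
    (hg : ∀ i, g i = ExteriorAlgebra.ι ℂ (Pi.single i 1))
    (p q : ExteriorAlgebra ℂ (Fin 8 → ℂ) →ₗ[ℂ] ExteriorAlgebra ℂ (Fin 8 → ℂ))
    (hpLeib : ∀ i, ∀ y, p (g i * y) = p (g i) * y - g i * p y)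
    (hqLeib : ∀ i, ∀ y, q (g i * y) = q (g i) * y - g i * q y)
    (hp1 : p (g 0) = 0) (hp2 : p (g 1) = 0) (hp3 : p (g 2) = 0)
    (hp4 : p (g 3) = a₁ • (g 0 * g 1) + a₂ • (g 0 * g 2) + a₆ • (g 1 * g 2))
    (hq1 : q (g 0) = 0) (hq2 : q (g 1) = 0) (hq3 : q (g 2) = 0)
    (hq4 : q (g 3) = a₃ • (g 0 * g 4) + a₄ • (g 0 * g 5) + a₅ • (g 0 * g 6)
      + a₇ • (g 1 * g 4) + a₈ • (g 1 * g 5) + a₉ • (g 1 * g 6)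
      + a₁₀ • (g 2 * g 4) + a₁₁ • (g 2 * g 5) + a₁₂ • (g 2 * g 6))
    (hpb1 : p (g 4) = 0) (hpb2 : p (g 5) = 0) (hpb3 : p (g 6) = 0)
    (hpb4 : p (g 7) = (starRingEnd ℂ) a₃ • (g 4 * g 0) + (starRingEnd ℂ) a₄ • (g 4 * g 1)
      + (starRingEnd ℂ) a₅ • (g 4 * g 2)
      + (starRingEnd ℂ) a₇ • (g 5 * g 0) + (starRingEnd ℂ) a₈ • (g 5 * g 1)
      + (starRingEnd ℂ) a₉ • (g 5 * g 2)
      + (starRingEnd ℂ) a₁₀ • (g 6 * g 0) + (starRingEnd ℂ) a₁₁ • (g 6 * g 1)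
      + (starRingEnd ℂ) a₁₂ • (g 6 * g 2))
    (hqb1 : q (g 4) = 0) (hqb2 : q (g 5) = 0) (hqb3 : q (g 6) = 0)
    (hqb4 : q (g 7) = (starRingEnd ℂ) a₁ • (g 4 * g 5) + (starRingEnd ℂ) a₂ • (g 4 * g 6)
      + (starRingEnd ℂ) a₆ • (g 5 * g 6))
    (F : ExteriorAlgebra ℂ (Fin 8 → ℂ))
    (hF : F = (Complex.I / 2) • (g 0 * g 4 + g 1 * g 5 + g 2 * g 6 + g 3 * g 7)) :
    p (q (F * F)) = 0 ↔
      Complex.normSq a₁ + Complex.normSq a₂ + Complex.normSq a₄ + Complex.normSq a₅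
        + Complex.normSq a₆ + Complex.normSq a₇ + Complex.normSq a₉
        + Complex.normSq a₁₀ + Complex.normSq a₁₁
      = 2 * (a₃ * (starRingEnd ℂ) a₈ + a₃ * (starRingEnd ℂ) a₁₂
          + a₈ * (starRingEnd ℂ) a₁₂).re := by
  have gsq : ∀ i, g i * g i = 0 := fun i => by
    rw [hg]; exact ExteriorAlgebra.ι_sq_zero _
  have gsw : ∀ i j : Fin 8, g i * g j = -(g j * g i) := fun i j => by
    rw [hg, hg, eq_neg_iff_add_eq_zero]
    exact ExteriorAlgebra.ι_add_mul_swap _ _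
  have gsw' : ∀ i j : Fin 8, ∀ x, g i * (g j * x) = -(g j * (g i * x)) := fun i j x => by
    rw [← mul_assoc, gsw, neg_mul, mul_assoc]
  have gsq' : ∀ i : Fin 8, ∀ x, g i * (g i * x) = 0 := fun i x => by
    rw [← mul_assoc, gsq, zero_mul]
  set c : ℂ := (Complex.I / 2) * ((Complex.I / 2) * ((-2 : ℂ) *
      ((a₁ * (starRingEnd ℂ) a₁ + a₂ * (starRingEnd ℂ) a₂ + a₄ * (starRingEnd ℂ) a₄ + a₅ * (starRingEnd ℂ) a₅ + a₆ * (starRingEnd ℂ) a₆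
        + a₇ * (starRingEnd ℂ) a₇ + a₉ * (starRingEnd ℂ) a₉ + a₁₀ * (starRingEnd ℂ) a₁₀ + a₁₁ * (starRingEnd ℂ) a₁₁)
       - (a₃ * (starRingEnd ℂ) a₈ + a₈ * (starRingEnd ℂ) a₃ + a₃ * (starRingEnd ℂ) a₁₂ + a₁₂ * (starRingEnd ℂ) a₃
          + a₈ * (starRingEnd ℂ) a₁₂ + a₁₂ * (starRingEnd ℂ) a₈)))) with hc
  have key : p (q (F * F)) = c • (g 0 * (g 1 * (g 2 * (g 4 * (g 5 * g 6))))) := by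
    simp only [hF, smul_mul_assoc, mul_smul_comm, map_smul, mul_add, add_mul,
      mul_assoc, map_add, hqLeib, hq1, hq2, hq3, hq4, hqb1, hqb2, hqb3, hqb4,
      hpLeib, hp1, hp2, hp3, hp4, hpb1, hpb2, hpb3, hpb4,
      map_sub, map_neg, map_zero, mul_sub, sub_mul, smul_add, smul_sub, smul_neg, smul_zero,
      zero_mul, mul_zero, neg_mul, mul_neg, neg_neg, zero_sub, sub_zero,
      zero_add, add_zero, neg_zero, smul_smul,
      gsq, gsq', gsw 1 0, gsw 2 0, gsw 2 1, gsw 3 0, gsw 3 1, gsw 3 2,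
      gsw 4 0, gsw 4 1, gsw 4 2, gsw 4 3, gsw 5 0, gsw 5 1, gsw 5 2, gsw 5 3,
      gsw 5 4, gsw 6 0, gsw 6 1, gsw 6 2, gsw 6 3, gsw 6 4, gsw 6 5,
      gsw 7 0, gsw 7 1, gsw 7 2, gsw 7 3, gsw 7 4, gsw 7 5, gsw 7 6,
      gsw' 1 0, gsw' 2 0, gsw' 2 1, gsw' 3 0, gsw' 3 1, gsw' 3 2,
      gsw' 4 0, gsw' 4 1, gsw' 4 2, gsw' 4 3, gsw' 5 0, gsw' 5 1, gsw' 5 2,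
      gsw' 5 3, gsw' 5 4, gsw' 6 0, gsw' 6 1, gsw' 6 2, gsw' 6 3, gsw' 6 4,
      gsw' 6 5, gsw' 7 0, gsw' 7 1, gsw' 7 2, gsw' 7 3, gsw' 7 4, gsw' 7 5,
      gsw' 7 6]
    match_scalars <;> ring
  have hm : g 0 * (g 1 * (g 2 * (g 4 * (g 5 * g 6)))) ≠ 0 := by
    intro h0
    classical
    set sel : Fin 6 → Fin 8 := ![0, 1, 2, 4, 5, 6] with hsel
    set f : ∀ n, (Fin 8 → ℂ) [⋀^Fin n]→ₗ[ℂ] ℂ := fun n =>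
      match n with
      | 6 => (Matrix.detRowAlternating).compLinearMap (LinearMap.funLeft ℂ ℂ sel)
      | _ => 0 with hf
    rw [hg, hg, hg, hg, hg, hg] at h0
    have h1 := congrArg (ExteriorAlgebra.liftAlternating f) h0
    rw [map_zero] at h1
    simp only [ExteriorAlgebra.liftAlternating_ι_mul,
      ExteriorAlgebra.liftAlternating_ι] at h1
    rw [hf] at h1
    simp only [AlternatingMap.curryLeft_apply_apply,
      AlternatingMap.compLinearMap_apply] at h1
    have h2 : (fun i => (LinearMap.funLeft ℂ ℂ sel)
        (![(Pi.single 0 1 : Fin 8 → ℂ), Pi.single 1 1, Pi.single 2 1, Pi.single 4 1,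
           Pi.single 5 1, Pi.single 6 1] i)) = (1 : Matrix (Fin 6) (Fin 6) ℂ) := by
      funext i j
      fin_cases i <;> fin_cases j <;>
        simp (config := { decide := true })
          [hsel, LinearMap.funLeft, Matrix.one_apply, Pi.single_apply] <;> rfl
    rw [h2] at h1
    have h3 : (1 : ℂ) = 0 := by
      rw [← Matrix.det_one (n := Fin 6) (R := ℂ)]; exact h1
    exact one_ne_zero h3
  rw [key, smul_eq_zero, or_iff_left hm]
  have hc2 : c = (1/2 : ℂ) *
      ((a₁ * (starRingEnd ℂ) a₁ + a₂ * (starRingEnd ℂ) a₂ + a₄ * (starRingEnd ℂ) a₄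
        + a₅ * (starRingEnd ℂ) a₅ + a₆ * (starRingEnd ℂ) a₆ + a₇ * (starRingEnd ℂ) a₇
        + a₉ * (starRingEnd ℂ) a₉ + a₁₀ * (starRingEnd ℂ) a₁₀ + a₁₁ * (starRingEnd ℂ) a₁₁)
       - (a₃ * (starRingEnd ℂ) a₈ + a₈ * (starRingEnd ℂ) a₃ + a₃ * (starRingEnd ℂ) a₁₂
          + a₁₂ * (starRingEnd ℂ) a₃ + a₈ * (starRingEnd ℂ) a₁₂ + a₁₂ * (starRingEnd ℂ) a₈)) := by
    rw [hc]
    have h4 : ∀ Y : ℂ, Complex.I/2 * (Complex.I/2 * ((-2) * Y))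
        = Complex.I * Complex.I * (-Y/2) := fun Y => by ring
    rw [h4, Complex.I_mul_I]; ring
  rw [hc2, mul_eq_zero, or_iff_right (by norm_num : (1/2 : ℂ) ≠ 0), sub_eq_zero]
  have hP : a₃ * (starRingEnd ℂ) a₈ + a₈ * (starRingEnd ℂ) a₃ + a₃ * (starRingEnd ℂ) a₁₂
      + a₁₂ * (starRingEnd ℂ) a₃ + a₈ * (starRingEnd ℂ) a₁₂ + a₁₂ * (starRingEnd ℂ) a₈
      = ((2 * (a₃ * (starRingEnd ℂ) a₈ + a₃ * (starRingEnd ℂ) a₁₂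
          + a₈ * (starRingEnd ℂ) a₁₂).re : ℝ) : ℂ) := by
    rw [← Complex.add_conj]
    simp only [map_add, map_mul, Complex.conj_conj]
    ring
  rw [hP]
  simp only [Complex.mul_conj]
  norm_cast
end

section
/- In the setting of the 8-dimensional nilpotent Lie algebra with dη^j = 0 (j=1,2,3) and dη^4 = Σ a_k (basis 2-forms), assume a_8 = 0 and the astheno-Kähler condition |a_1|^2+|a_2|^2+|a_4|^2+|a_5|^2+|a_6|^2+|a_7|^2+|a_9|^2+|a_{10}|^2+|a_{11}|^2 = 2Re(a_3 ā_{12}). Then the fundamental form F = (i/2)Σ η^j ∧ η̄^j satisfies ∂∂̄F = 0 if and only if a_1 = a_4 = a_6 = a_7 = a_9 = a_{11} = 0. -/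
/-!
Since `η¹, η², η³` and their conjugates are closed, only the term `η⁴ ∧ η̄⁴` of `F` contributes,
and `∂∂̄F = (i/2) (∂̄η⁴ ∧ ∂η̄⁴ - ∂η⁴ ∧ ∂̄η̄⁴)`. In the basis `η^{ij} ∧ η̄^{kl}` of `(2,2)`-forms the
coefficients of `η^{12 1̄2̄}` and `η^{23 2̄3̄}` are `-(|a₁|² + |a₄|² + |a₇|²)` and
`-(|a₆|² + |a₉|² + |a₁₁|²)`, so `∂∂̄F = 0` forces the six coefficients to vanish. Conversely, once
they vanish the only coefficient left is that of `η^{13 1̄3̄}`, namely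
`2 Re(a₃ ā₁₂) - |a₂|² - |a₅|² - |a₁₀|²`, which is zero by the astheno-Kähler condition.
-/

open ExteriorAlgebra ComplexConjugate

section Leibniz

variable {A : Type*} [Ring A] {D : A → A} {x y : A}

theorem map_mul_eq_zero_of_leibniz (hx : ∀ z, D (x * z) = D x * z - x * D z) (hDx : D x = 0)
    (hDy : D y = 0) : D (x * y) = 0 := by
  rw [hx, hDx, hDy, zero_mul, mul_zero, sub_zero]

theorem map_mul_mul_of_leibniz (hx : ∀ z, D (x * z) = D x * z - x * D z)
    (hy : ∀ z, D (y * z) = D y * z - y * D z) (hDx : D x = 0) (hDy : D y = 0) (z : A) :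
    D (x * (y * z)) = x * (y * D z) := by
  rw [hx, hy, hDx, hDy, zero_mul, zero_mul, zero_sub, zero_sub, mul_neg, neg_neg]

end Leibniz

namespace ExteriorAlgebra

variable {R M : Type*} [CommRing R] [AddCommGroup M] [Module R M]

theorem ι_mul_ι_comm (x y : M) : ι R x * ι R y = -(ι R y * ι R x) :=
  eq_neg_of_add_eq_zero_left (ι_add_mul_swap x y)

theorem ι_mul_ι_mul_comm (x y : M) (z : ExteriorAlgebra R M) :
    ι R x * (ι R y * z) = -(ι R y * (ι R x * z)) := by
  rw [← mul_assoc, ι_mul_ι_comm, neg_mul, mul_assoc]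

theorem ι_mul_ι_mul_self (x : M) (z : ExteriorAlgebra R M) : ι R x * (ι R x * z) = 0 := by
  rw [← mul_assoc, ι_sq_zero, zero_mul]

open Set.powersetCard in
theorem basis_apply_ofFinEmb {I : Type*} [LinearOrder I] (b : Module.Basis I R M) {n : ℕ}
    (f : Fin n ↪o I) : b.ExteriorAlgebra (Finset.univ.map f.toEmbedding) = ιMulti R n (b ∘ f) := by
  have := basis_apply_powersetCard b (ofFinEmbEquiv f)
  rwa [ιMulti_family, Equiv.symm_apply_apply, ofFinEmbEquiv_apply, val_ofFinEmb] at this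

end ExteriorAlgebra

namespace NilpotentSKT

abbrev η (i : Fin 8) : ExteriorAlgebra ℂ (Fin 8 → ℂ) := ι ℂ (Pi.single i 1)

noncomputable abbrev basis : Module.Basis (Finset (Fin 8)) ℂ (ExteriorAlgebra ℂ (Fin 8 → ℂ)) :=
  (Pi.basisFun ℂ (Fin 8)).ExteriorAlgebra

theorem basis_eq_η_mul_η_mul_η_mul_η {i j k l : Fin 8} (hij : i < j) (hjk : j < k)
    (hkl : k < l) : basis {i, j, k, l} = η i * (η j * (η k * η l)) := by
  have hmono : StrictMono ![i, j, k, l] := by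
    refine Fin.strictMono_iff_lt_succ.2 fun m => ?_
    fin_cases m <;> assumption
  have := basis_apply_ofFinEmb (Pi.basisFun ℂ (Fin 8)) (OrderEmbedding.ofStrictMono _ hmono)
  simpa [ιMulti_apply, Fin.univ_succ, Matrix.vecTail] using this

/-- `∂∂̄F = (i/2) • ddbarExpansion a₁ … a₁₂`, expanded in the basis `η^{ij} ∧ η̄^{kl}`. -/
noncomputable def ddbarExpansion (a₁ a₂ a₃ a₄ a₅ a₆ a₇ a₉ a₁₀ a₁₁ a₁₂ : ℂ) :
    ExteriorAlgebra ℂ (Fin 8 → ℂ) :=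
  -(a₁ * conj a₁ + a₄ * conj a₄ + a₇ * conj a₇) • basis {0, 1, 4, 5}
  + (a₃ * conj a₁₁ + a₉ * conj a₃ - a₅ * conj a₄ - a₇ * conj a₁₀ - a₁ * conj a₂)
    • basis {0, 1, 4, 6}
  + (a₄ * conj a₁₁ + a₉ * conj a₇ - a₁ * conj a₆) • basis {0, 1, 5, 6}
  + (a₃ * conj a₉ + a₁₁ * conj a₃ - a₄ * conj a₅ - a₁₀ * conj a₇ - a₂ * conj a₁)
    • basis {0, 2, 4, 5}
  + (a₃ * conj a₁₂ + a₁₂ * conj a₃ - a₂ * conj a₂ - a₅ * conj a₅ - a₁₀ * conj a₁₀)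
    • basis {0, 2, 4, 6}
  + (a₄ * conj a₁₂ + a₁₂ * conj a₇ - a₅ * conj a₉ - a₁₁ * conj a₁₀ - a₂ * conj a₆)
    • basis {0, 2, 5, 6}
  + (a₇ * conj a₉ + a₁₁ * conj a₄ - a₆ * conj a₁) • basis {1, 2, 4, 5}
  + (a₇ * conj a₁₂ + a₁₂ * conj a₄ - a₉ * conj a₅ - a₁₀ * conj a₁₁ - a₆ * conj a₂)
    • basis {1, 2, 4, 6}
  - (a₆ * conj a₆ + a₉ * conj a₉ + a₁₁ * conj a₁₁) • basis {1, 2, 5, 6}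

theorem mul_sub_mul_eq_ddbarExpansion (a₁ a₂ a₃ a₄ a₅ a₆ a₇ a₉ a₁₀ a₁₁ a₁₂ : ℂ) :
    (a₃ • (η 0 * η 4) + a₄ • (η 0 * η 5) + a₅ • (η 0 * η 6) + a₇ • (η 1 * η 4)
        + a₉ • (η 1 * η 6) + a₁₀ • (η 2 * η 4) + a₁₁ • (η 2 * η 5) + a₁₂ • (η 2 * η 6))
      * (conj a₃ • (η 4 * η 0) + conj a₄ • (η 4 * η 1) + conj a₅ • (η 4 * η 2)
        + conj a₇ • (η 5 * η 0) + conj a₉ • (η 5 * η 2) + conj a₁₀ • (η 6 * η 0)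
        + conj a₁₁ • (η 6 * η 1) + conj a₁₂ • (η 6 * η 2))
    - (a₁ • (η 0 * η 1) + a₂ • (η 0 * η 2) + a₆ • (η 1 * η 2))
      * (conj a₁ • (η 4 * η 5) + conj a₂ • (η 4 * η 6) + conj a₆ • (η 5 * η 6))
    = ddbarExpansion a₁ a₂ a₃ a₄ a₅ a₆ a₇ a₉ a₁₀ a₁₁ a₁₂ := by
  simp only [ddbarExpansion, basis_eq_η_mul_η_mul_η_mul_η, Fin.reduceLT]
  -- the guard `j < i` orients anticommutation towards increasing indices, so `simp` terminates
  have anticomm : ∀ i j : Fin 8, j < i → η i * η j = -(η j * η i) := fun i j _ => ι_mul_ι_comm _ _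
  have anticomm_mul : ∀ i j : Fin 8, j < i → ∀ z, η i * (η j * z) = -(η j * (η i * z)) :=
    fun i j _ => ι_mul_ι_mul_comm _ _
  simp only [mul_add, add_mul, mul_smul_comm, smul_mul_assoc, smul_add, smul_neg, mul_assoc,
    mul_neg, neg_neg, smul_zero, mul_zero, add_zero, ι_sq_zero, ι_mul_ι_mul_self,
    anticomm, anticomm_mul, Fin.reduceLT, sub_eq_add_neg]
  match_scalars <;> ring

theorem basis_repr_ddbarExpansion_0145 (a₁ a₂ a₃ a₄ a₅ a₆ a₇ a₉ a₁₀ a₁₁ a₁₂ : ℂ) :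
    basis.repr (ddbarExpansion a₁ a₂ a₃ a₄ a₅ a₆ a₇ a₉ a₁₀ a₁₁ a₁₂) {0, 1, 4, 5}
      = -(a₁ * conj a₁ + a₄ * conj a₄ + a₇ * conj a₇) := by
  simp +decide [ddbarExpansion]

theorem basis_repr_ddbarExpansion_1256 (a₁ a₂ a₃ a₄ a₅ a₆ a₇ a₉ a₁₀ a₁₁ a₁₂ : ℂ) :
    basis.repr (ddbarExpansion a₁ a₂ a₃ a₄ a₅ a₆ a₇ a₉ a₁₀ a₁₁ a₁₂) {1, 2, 5, 6}
      = -(a₆ * conj a₆ + a₉ * conj a₉ + a₁₁ * conj a₁₁) := by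
  simp +decide [ddbarExpansion]

theorem eq_zero_of_mul_conj_add_mul_conj_add_mul_conj_eq_zero {a b c : ℂ}
    (h : a * conj a + b * conj b + c * conj c = 0) : a = 0 ∧ b = 0 ∧ c = 0 := by
  simp only [Complex.mul_conj] at h
  have hsum : Complex.normSq a + Complex.normSq b + Complex.normSq c = 0 := by exact_mod_cast h
  have ha := Complex.normSq_nonneg a
  have hb := Complex.normSq_nonneg b
  have hc := Complex.normSq_nonneg c
  exact ⟨Complex.normSq_eq_zero.1 (by linarith), Complex.normSq_eq_zero.1 (by linarith),
    Complex.normSq_eq_zero.1 (by linarith)⟩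

theorem ddbarExpansion_eq_zero_iff {a₁ a₂ a₃ a₄ a₅ a₆ a₇ a₉ a₁₀ a₁₁ a₁₂ : ℂ}
    (hAK : Complex.normSq a₁ + Complex.normSq a₂ + Complex.normSq a₄ + Complex.normSq a₅
        + Complex.normSq a₆ + Complex.normSq a₇ + Complex.normSq a₉
        + Complex.normSq a₁₀ + Complex.normSq a₁₁
      = 2 * (a₃ * conj a₁₂).re) :
    ddbarExpansion a₁ a₂ a₃ a₄ a₅ a₆ a₇ a₉ a₁₀ a₁₁ a₁₂ = 0 ↔
      (a₁ = 0 ∧ a₄ = 0 ∧ a₆ = 0 ∧ a₇ = 0 ∧ a₉ = 0 ∧ a₁₁ = 0) := by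
  constructor
  · intro h
    have h0145 := basis_repr_ddbarExpansion_0145 a₁ a₂ a₃ a₄ a₅ a₆ a₇ a₉ a₁₀ a₁₁ a₁₂
    have h1256 := basis_repr_ddbarExpansion_1256 a₁ a₂ a₃ a₄ a₅ a₆ a₇ a₉ a₁₀ a₁₁ a₁₂
    rw [h, map_zero, Finsupp.zero_apply] at h0145 h1256
    obtain ⟨h₁, h₄, h₇⟩ := eq_zero_of_mul_conj_add_mul_conj_add_mul_conj_eq_zero
      (a := a₁) (b := a₄) (c := a₇) (by linear_combination h0145)
    obtain ⟨h₆, h₉, h₁₁⟩ := eq_zero_of_mul_conj_add_mul_conj_add_mul_conj_eq_zero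
      (a := a₆) (b := a₉) (c := a₁₁) (by linear_combination h1256)
    exact ⟨h₁, h₄, h₆, h₇, h₉, h₁₁⟩
  · rintro ⟨rfl, rfl, rfl, rfl, rfl, rfl⟩
    simp only [Complex.normSq_zero, zero_add, add_zero] at hAK
    have hcoeff :
        a₃ * conj a₁₂ + a₁₂ * conj a₃ - a₂ * conj a₂ - a₅ * conj a₅ - a₁₀ * conj a₁₀ = 0 := by
      have hconj : a₁₂ * conj a₃ = conj (a₃ * conj a₁₂) := by
        rw [map_mul, Complex.conj_conj, mul_comm]
      rw [hconj, Complex.add_conj, Complex.mul_conj, Complex.mul_conj, Complex.mul_conj]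
      exact_mod_cast (by linarith : 2 * (a₃ * conj a₁₂).re - Complex.normSq a₂
        - Complex.normSq a₅ - Complex.normSq a₁₀ = 0)
    simp [ddbarExpansion, hcoeff]

end NilpotentSKT

open NilpotentSKT

theorem statement5
    (a₁ a₂ a₃ a₄ a₅ a₆ a₇ a₉ a₁₀ a₁₁ a₁₂ : ℂ)
    (hAK : Complex.normSq a₁ + Complex.normSq a₂ + Complex.normSq a₄ + Complex.normSq a₅
        + Complex.normSq a₆ + Complex.normSq a₇ + Complex.normSq a₉
        + Complex.normSq a₁₀ + Complex.normSq a₁₁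
      = 2 * (a₃ * (starRingEnd ℂ) a₁₂).re)
    (g : Fin 8 → ExteriorAlgebra ℂ (Fin 8 → ℂ))
    (hg : ∀ i, g i = ExteriorAlgebra.ι ℂ (Pi.single i 1))
    (p q : ExteriorAlgebra ℂ (Fin 8 → ℂ) →ₗ[ℂ] ExteriorAlgebra ℂ (Fin 8 → ℂ))
    (hpLeib : ∀ i, ∀ y, p (g i * y) = p (g i) * y - g i * p y)
    (hqLeib : ∀ i, ∀ y, q (g i * y) = q (g i) * y - g i * q y)
    (hp1 : p (g 0) = 0) (hp2 : p (g 1) = 0) (hp3 : p (g 2) = 0)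
    (hp4 : p (g 3) = a₁ • (g 0 * g 1) + a₂ • (g 0 * g 2) + a₆ • (g 1 * g 2))
    (hq1 : q (g 0) = 0) (hq2 : q (g 1) = 0) (hq3 : q (g 2) = 0)
    (hq4 : q (g 3) = a₃ • (g 0 * g 4) + a₄ • (g 0 * g 5) + a₅ • (g 0 * g 6)
      + a₇ • (g 1 * g 4) + a₉ • (g 1 * g 6)
      + a₁₀ • (g 2 * g 4) + a₁₁ • (g 2 * g 5) + a₁₂ • (g 2 * g 6))
    (hpb1 : p (g 4) = 0) (hpb2 : p (g 5) = 0) (hpb3 : p (g 6) = 0)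
    (hpb4 : p (g 7) = (starRingEnd ℂ) a₃ • (g 4 * g 0) + (starRingEnd ℂ) a₄ • (g 4 * g 1)
      + (starRingEnd ℂ) a₅ • (g 4 * g 2)
      + (starRingEnd ℂ) a₇ • (g 5 * g 0) + (starRingEnd ℂ) a₉ • (g 5 * g 2)
      + (starRingEnd ℂ) a₁₀ • (g 6 * g 0) + (starRingEnd ℂ) a₁₁ • (g 6 * g 1)
      + (starRingEnd ℂ) a₁₂ • (g 6 * g 2))
    (hqb1 : q (g 4) = 0) (hqb2 : q (g 5) = 0) (hqb3 : q (g 6) = 0)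
    (hqb4 : q (g 7) = (starRingEnd ℂ) a₁ • (g 4 * g 5) + (starRingEnd ℂ) a₂ • (g 4 * g 6)
      + (starRingEnd ℂ) a₆ • (g 5 * g 6))
    (F : ExteriorAlgebra ℂ (Fin 8 → ℂ))
    (hF : F = (Complex.I / 2) • (g 0 * g 4 + g 1 * g 5 + g 2 * g 6 + g 3 * g 7)) :
    p (q F) = 0 ↔ (a₁ = 0 ∧ a₄ = 0 ∧ a₆ = 0 ∧ a₇ = 0 ∧ a₉ = 0 ∧ a₁₁ = 0) := by
  obtain rfl : g = η := funext hg
  subst hF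
  have hp_mul : ∀ i j, p (η i) = 0 → p (η j) = 0 → p (η i * η j) = 0 :=
    fun i j hi hj => map_mul_eq_zero_of_leibniz (hpLeib i) hi hj
  have hq_mul : ∀ i j, q (η i) = 0 → q (η j) = 0 → q (η i * η j) = 0 :=
    fun i j hi hj => map_mul_eq_zero_of_leibniz (hqLeib i) hi hj
  have hp_mul_mul : ∀ i j, p (η i) = 0 → p (η j) = 0 →
      ∀ z, p (η i * (η j * z)) = η i * (η j * p z) :=
    fun i j hi hj => map_mul_mul_of_leibniz (hpLeib i) (hpLeib j) hi hj
  have hpq₇ : p (q (η 7)) = 0 := by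
    rw [hqb4]
    simp only [map_add, map_smul, hp_mul, hpb1, hpb2, hpb3, smul_zero, add_zero]
  have hpq₃ : p (q (η 3) * η 7) = q (η 3) * p (η 7) := by
    rw [hq4]
    simp only [add_mul, smul_mul_assoc, mul_assoc, map_add, map_smul, hp_mul_mul, hp1, hp2, hp3,
      hpb1, hpb2, hpb3]
  have hpqF : p (q ((Complex.I / 2) • (η 0 * η 4 + η 1 * η 5 + η 2 * η 6 + η 3 * η 7)))
      = (Complex.I / 2) • (q (η 3) * p (η 7) - p (η 3) * q (η 7)) := by
    rw [map_smul, map_add, map_add, map_add, hq_mul 0 4 hq1 hqb1, hq_mul 1 5 hq2 hqb2,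
      hq_mul 2 6 hq3 hqb3, hqLeib, zero_add, zero_add, zero_add, map_smul, map_sub, hpLeib, hpq₇,
      hpq₃, mul_zero, sub_zero]
  rw [hpqF, hq4, hpb4, hp4, hqb4, mul_sub_mul_eq_ddbarExpansion, smul_eq_zero,
    or_iff_right (div_ne_zero Complex.I_ne_zero two_ne_zero)]
  exact ddbarExpansion_eq_zero_iff hAK
end

section
/- Let η^1,…,η^4 be (1,0)-forms with dη^j = 0 for j=1,2,3 and dη^4 = 2(η^{1 1̄} + η^{1 3̄} + η^{3 1̄} + η^{3 3̄}). Then the fundamental form F = (i/2) Σ_{j=1}^4 η^j ∧ η̄^j satisfies both ∂∂̄F = 0 and ∂∂̄F^2 = 0. -/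
/-!
STATEMENT 6. With `dηʲ = 0` (j = 1,2,3) and `dη⁴ = 2(η^{11̄} + η^{13̄} + η^{31̄} + η^{33̄})`
(i.e. `a₃ = a₅ = a₁₀ = a₁₂ = 2`, all other `aₖ = 0`), the fundamental form
`F = (i/2)Σ ηʲ∧η̄ʲ` satisfies both `∂∂̄F = 0` and `∂∂̄F² = 0`.

Generators `g 0,…,g 3 = η¹,…,η⁴`, `g 4,…,g 7 = η̄¹,…,η̄⁴`; `p = ∂`, `q = ∂̄` are the
antiderivations given on generators by the bidegree components of the structure equations.
-/
set_option maxHeartbeats 4000000 in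
theorem statement6
    (g : Fin 8 → ExteriorAlgebra ℂ (Fin 8 → ℂ))
    (hg : ∀ i, g i = ExteriorAlgebra.ι ℂ (Pi.single i 1))
    (p q : ExteriorAlgebra ℂ (Fin 8 → ℂ) →ₗ[ℂ] ExteriorAlgebra ℂ (Fin 8 → ℂ))
    (hpLeib : ∀ i, ∀ y, p (g i * y) = p (g i) * y - g i * p y)
    (hqLeib : ∀ i, ∀ y, q (g i * y) = q (g i) * y - g i * q y)
    (hp1 : p (g 0) = 0) (hp2 : p (g 1) = 0) (hp3 : p (g 2) = 0)
    (hp4 : p (g 3) = 0)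
    (hq1 : q (g 0) = 0) (hq2 : q (g 1) = 0) (hq3 : q (g 2) = 0)
    (hq4 : q (g 3) = (2 : ℂ) • (g 0 * g 4 + g 0 * g 6 + g 2 * g 4 + g 2 * g 6))
    (hpb1 : p (g 4) = 0) (hpb2 : p (g 5) = 0) (hpb3 : p (g 6) = 0)
    (hpb4 : p (g 7) = (2 : ℂ) • (g 4 * g 0 + g 4 * g 2 + g 6 * g 0 + g 6 * g 2))
    (hqb1 : q (g 4) = 0) (hqb2 : q (g 5) = 0) (hqb3 : q (g 6) = 0)
    (hqb4 : q (g 7) = 0)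
    (F : ExteriorAlgebra ℂ (Fin 8 → ℂ))
    (hF : F = (Complex.I / 2) • (g 0 * g 4 + g 1 * g 5 + g 2 * g 6 + g 3 * g 7)) :
    p (q F) = 0 ∧ p (q (F * F)) = 0 := by
  have sq : ∀ i, g i * g i = 0 := by
    intro i; rw [hg]; exact ExteriorAlgebra.ι_sq_zero _
  have sw : ∀ i j : Fin 8, j < i → g i * g j = -(g j * g i) := by
    intro i j _; rw [hg, hg, eq_neg_iff_add_eq_zero]
    exact ExteriorAlgebra.ι_add_mul_swap _ _
  have sq' : ∀ i x, g i * (g i * x) = 0 := by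
    intro i x; rw [← mul_assoc, sq, zero_mul]
  have sw' : ∀ (i j : Fin 8) x, j < i → g i * (g j * x) = -(g j * (g i * x)) := by
    intro i j x h; rw [← mul_assoc, sw i j h, neg_mul, mul_assoc]
  have w10 := sw 1 0 (by decide)
  have v10 : ∀ x, g 1 * (g 0 * x) = -(g 0 * (g 1 * x)) := fun x => sw' 1 0 x (by decide)
  have w20 := sw 2 0 (by decide)
  have v20 : ∀ x, g 2 * (g 0 * x) = -(g 0 * (g 2 * x)) := fun x => sw' 2 0 x (by decide)
  have w21 := sw 2 1 (by decide)
  have v21 : ∀ x, g 2 * (g 1 * x) = -(g 1 * (g 2 * x)) := fun x => sw' 2 1 x (by decide)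
  have w30 := sw 3 0 (by decide)
  have v30 : ∀ x, g 3 * (g 0 * x) = -(g 0 * (g 3 * x)) := fun x => sw' 3 0 x (by decide)
  have w31 := sw 3 1 (by decide)
  have v31 : ∀ x, g 3 * (g 1 * x) = -(g 1 * (g 3 * x)) := fun x => sw' 3 1 x (by decide)
  have w32 := sw 3 2 (by decide)
  have v32 : ∀ x, g 3 * (g 2 * x) = -(g 2 * (g 3 * x)) := fun x => sw' 3 2 x (by decide)
  have w40 := sw 4 0 (by decide)
  have v40 : ∀ x, g 4 * (g 0 * x) = -(g 0 * (g 4 * x)) := fun x => sw' 4 0 x (by decide)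
  have w41 := sw 4 1 (by decide)
  have v41 : ∀ x, g 4 * (g 1 * x) = -(g 1 * (g 4 * x)) := fun x => sw' 4 1 x (by decide)
  have w42 := sw 4 2 (by decide)
  have v42 : ∀ x, g 4 * (g 2 * x) = -(g 2 * (g 4 * x)) := fun x => sw' 4 2 x (by decide)
  have w43 := sw 4 3 (by decide)
  have v43 : ∀ x, g 4 * (g 3 * x) = -(g 3 * (g 4 * x)) := fun x => sw' 4 3 x (by decide)
  have w50 := sw 5 0 (by decide)
  have v50 : ∀ x, g 5 * (g 0 * x) = -(g 0 * (g 5 * x)) := fun x => sw' 5 0 x (by decide)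
  have w51 := sw 5 1 (by decide)
  have v51 : ∀ x, g 5 * (g 1 * x) = -(g 1 * (g 5 * x)) := fun x => sw' 5 1 x (by decide)
  have w52 := sw 5 2 (by decide)
  have v52 : ∀ x, g 5 * (g 2 * x) = -(g 2 * (g 5 * x)) := fun x => sw' 5 2 x (by decide)
  have w53 := sw 5 3 (by decide)
  have v53 : ∀ x, g 5 * (g 3 * x) = -(g 3 * (g 5 * x)) := fun x => sw' 5 3 x (by decide)
  have w54 := sw 5 4 (by decide)
  have v54 : ∀ x, g 5 * (g 4 * x) = -(g 4 * (g 5 * x)) := fun x => sw' 5 4 x (by decide)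
  have w60 := sw 6 0 (by decide)
  have v60 : ∀ x, g 6 * (g 0 * x) = -(g 0 * (g 6 * x)) := fun x => sw' 6 0 x (by decide)
  have w61 := sw 6 1 (by decide)
  have v61 : ∀ x, g 6 * (g 1 * x) = -(g 1 * (g 6 * x)) := fun x => sw' 6 1 x (by decide)
  have w62 := sw 6 2 (by decide)
  have v62 : ∀ x, g 6 * (g 2 * x) = -(g 2 * (g 6 * x)) := fun x => sw' 6 2 x (by decide)
  have w63 := sw 6 3 (by decide)
  have v63 : ∀ x, g 6 * (g 3 * x) = -(g 3 * (g 6 * x)) := fun x => sw' 6 3 x (by decide)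
  have w64 := sw 6 4 (by decide)
  have v64 : ∀ x, g 6 * (g 4 * x) = -(g 4 * (g 6 * x)) := fun x => sw' 6 4 x (by decide)
  have w65 := sw 6 5 (by decide)
  have v65 : ∀ x, g 6 * (g 5 * x) = -(g 5 * (g 6 * x)) := fun x => sw' 6 5 x (by decide)
  have w70 := sw 7 0 (by decide)
  have v70 : ∀ x, g 7 * (g 0 * x) = -(g 0 * (g 7 * x)) := fun x => sw' 7 0 x (by decide)
  have w71 := sw 7 1 (by decide)
  have v71 : ∀ x, g 7 * (g 1 * x) = -(g 1 * (g 7 * x)) := fun x => sw' 7 1 x (by decide)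
  have w72 := sw 7 2 (by decide)
  have v72 : ∀ x, g 7 * (g 2 * x) = -(g 2 * (g 7 * x)) := fun x => sw' 7 2 x (by decide)
  have w73 := sw 7 3 (by decide)
  have v73 : ∀ x, g 7 * (g 3 * x) = -(g 3 * (g 7 * x)) := fun x => sw' 7 3 x (by decide)
  have w74 := sw 7 4 (by decide)
  have v74 : ∀ x, g 7 * (g 4 * x) = -(g 4 * (g 7 * x)) := fun x => sw' 7 4 x (by decide)
  have w75 := sw 7 5 (by decide)
  have v75 : ∀ x, g 7 * (g 5 * x) = -(g 5 * (g 7 * x)) := fun x => sw' 7 5 x (by decide)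
  have w76 := sw 7 6 (by decide)
  have v76 : ∀ x, g 7 * (g 6 * x) = -(g 6 * (g 7 * x)) := fun x => sw' 7 6 x (by decide)
  subst hF
  constructor <;>
  · simp only [map_smul, map_add, mul_assoc, mul_add, add_mul, smul_add,
      smul_mul_assoc, mul_smul_comm, hpLeib, hqLeib, hp1, hp2, hp3, hp4,
      hq1, hq2, hq3, hq4, hpb1, hpb2, hpb3, hpb4, hqb1, hqb2, hqb3, hqb4,
      zero_mul, mul_zero, sub_zero, zero_sub, sub_neg_eq_add, map_neg, map_zero, neg_neg,
      mul_neg, neg_mul, add_zero, zero_add, smul_neg, smul_zero, neg_zero, sq, sq',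
      w10, v10, w20, v20, w21, v21, w30, v30, w31, v31, w32, v32, w40, v40, w41, v41, w42, v42, w43, v43, w50, v50, w51, v51, w52, v52, w53, v53, w54, v54, w60, v60, w61, v61, w62, v62, w63, v63, w64, v64, w65, v65, w70, v70, w71, v71, w72, v72, w73, v73, w74, v74, w75, v75, w76, v76]
    module
end

section
/- With the 8-dimensional nilpotent Lie algebra defined by dη^j = 0 (j=1,2,3) and dη^4 = Σ a_k(basis 2-forms) with the coefficients a_k satisfying the astheno-Kähler condition for the diagonal metric, the fundamental form F' = (i/2)(2 η^1∧η̄^1 + 3 η^2∧η̄^2 + 4 η^3∧η̄^3 + 5 η^4∧η̄^4) of the weighted metric satisfies ∂∂̄(F'^2) ≠ 0 for some admissible choice of the a_k (e.g. a_3 = a_5 = a_{10} = a_{12} = 2, all other a_k = 0). Hence the astheno-Kähler property depends on the metric, not only on the complex structure. -/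
set_option maxRecDepth 10000
set_option maxHeartbeats 1000000

open ExteriorAlgebra

noncomputable def Lmap : (Fin 8 → ℂ) →ₗ[ℂ] (Fin 6 → ℂ) where
  toFun v := fun j => v (![0, 1, 2, 4, 5, 6] j)
  map_add' := by intros; ext; simp
  map_smul' := by intros; ext; simp

noncomputable def Amap : (Fin 8 → ℂ) [⋀^Fin 6]→ₗ[ℂ] ℂ :=
  (Matrix.detRowAlternating).compLinearMap Lmap

noncomputable def fFam : ∀ i : ℕ, (Fin 8 → ℂ) [⋀^Fin i]→ₗ[ℂ] ℂ := fun i =>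
  match i with
  | 6 => Amap
  | _ => 0

@[simp] lemma fFam_six : fFam 6 = Amap := rfl

lemma Amap_val :
    Amap ![Pi.single 0 1, Pi.single 1 1, Pi.single 2 1,
      Pi.single 4 1, Pi.single 5 1, Pi.single 6 1] = 1 := by
  have h : (fun i => Lmap (![Pi.single 0 1, Pi.single 1 1, Pi.single 2 1,
      Pi.single 4 1, Pi.single 5 1, Pi.single 6 1] i)) = (1 : Matrix (Fin 6) (Fin 6) ℂ) := by
    ext i j
    fin_cases i <;> fin_cases j <;>
      norm_num [Lmap, Matrix.one_apply, Pi.single_apply, Matrix.cons_val_zero,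
        Matrix.cons_val_succ, Fin.ext_iff] <;> decide
  rw [Amap, AlternatingMap.compLinearMap_apply, h]
  exact Matrix.det_one

/-!
STATEMENT 8. For the 8-dimensional nilpotent Lie algebra of Statement 4, there is an
admissible choice of coefficients `a₁,…,a₁₂` (i.e. satisfying the astheno-Kähler
condition `Σ'|aₖ|² = 2Re(a₃ā₈ + a₃ā₁₂ + a₈ā₁₂)` for the diagonal metric) such that the
fundamental form `F' = (i/2)(2η¹∧η̄¹ + 3η²∧η̄² + 4η³∧η̄³ + 5η⁴∧η̄⁴)` of the weighted
metric satisfies `∂∂̄(F'²) ≠ 0`.  Hence the astheno-Kähler property depends on the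
metric, not only on the complex structure.

Same Chevalley–Eilenberg model as before: generators `g 0,…,g 3 = η¹,…,η⁴`,
`g 4,…,g 7 = η̄¹,…,η̄⁴`; `p = ∂`, `q = ∂̄` antiderivations determined on the generators
by the bidegree components of the structure equations with coefficients `a₁,…,a₁₂`.
-/
theorem statement8 :
    ∃ a₁ a₂ a₃ a₄ a₅ a₆ a₇ a₈ a₉ a₁₀ a₁₁ a₁₂ : ℂ,
      (Complex.normSq a₁ + Complex.normSq a₂ + Complex.normSq a₄ + Complex.normSq a₅
        + Complex.normSq a₆ + Complex.normSq a₇ + Complex.normSq a₉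
        + Complex.normSq a₁₀ + Complex.normSq a₁₁
        = 2 * (a₃ * (starRingEnd ℂ) a₈ + a₃ * (starRingEnd ℂ) a₁₂
            + a₈ * (starRingEnd ℂ) a₁₂).re) ∧
      ∀ (g : Fin 8 → ExteriorAlgebra ℂ (Fin 8 → ℂ)),
        (∀ i, g i = ExteriorAlgebra.ι ℂ (Pi.single i 1)) →
      ∀ (p q : ExteriorAlgebra ℂ (Fin 8 → ℂ) →ₗ[ℂ] ExteriorAlgebra ℂ (Fin 8 → ℂ)),
        (∀ i, ∀ y, p (g i * y) = p (g i) * y - g i * p y) →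
        (∀ i, ∀ y, q (g i * y) = q (g i) * y - g i * q y) →
        p (g 0) = 0 → p (g 1) = 0 → p (g 2) = 0 →
        p (g 3) = a₁ • (g 0 * g 1) + a₂ • (g 0 * g 2) + a₆ • (g 1 * g 2) →
        q (g 0) = 0 → q (g 1) = 0 → q (g 2) = 0 →
        q (g 3) = a₃ • (g 0 * g 4) + a₄ • (g 0 * g 5) + a₅ • (g 0 * g 6)
          + a₇ • (g 1 * g 4) + a₈ • (g 1 * g 5) + a₉ • (g 1 * g 6)
          + a₁₀ • (g 2 * g 4) + a₁₁ • (g 2 * g 5) + a₁₂ • (g 2 * g 6) →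
        p (g 4) = 0 → p (g 5) = 0 → p (g 6) = 0 →
        p (g 7) = (starRingEnd ℂ) a₃ • (g 4 * g 0) + (starRingEnd ℂ) a₄ • (g 4 * g 1)
          + (starRingEnd ℂ) a₅ • (g 4 * g 2)
          + (starRingEnd ℂ) a₇ • (g 5 * g 0) + (starRingEnd ℂ) a₈ • (g 5 * g 1)
          + (starRingEnd ℂ) a₉ • (g 5 * g 2)
          + (starRingEnd ℂ) a₁₀ • (g 6 * g 0) + (starRingEnd ℂ) a₁₁ • (g 6 * g 1)
          + (starRingEnd ℂ) a₁₂ • (g 6 * g 2) →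
        q (g 4) = 0 → q (g 5) = 0 → q (g 6) = 0 →
        q (g 7) = (starRingEnd ℂ) a₁ • (g 4 * g 5) + (starRingEnd ℂ) a₂ • (g 4 * g 6)
          + (starRingEnd ℂ) a₆ • (g 5 * g 6) →
      ∀ F' : ExteriorAlgebra ℂ (Fin 8 → ℂ),
        F' = (Complex.I / 2) • ((2 : ℂ) • (g 0 * g 4) + (3 : ℂ) • (g 1 * g 5)
          + (4 : ℂ) • (g 2 * g 6) + (5 : ℂ) • (g 3 * g 7)) →
        p (q (F' * F')) ≠ 0 := by
  refine ⟨0, 0, 1, 2, 0, 0, 0, 0, 0, 0, 0, 2, ?_, ?_⟩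
  · simp [Complex.normSq]
  intro g hg p q hp hq hp0 hp1 hp2 hp3 hq0 hq1 hq2 hq3 hp4 hp5 hp6 hp7 hq4 hq5 hq6 hq7 F' hF
  -- simplify structure values
  simp only [map_one, map_ofNat, one_smul, zero_smul, add_zero, zero_add, map_zero] at hp3 hq3 hp7 hq7
  have hgsq : ∀ (i : Fin 8) (y : ExteriorAlgebra ℂ (Fin 8 → ℂ)), g i * (g i * y) = 0 := by
    intro i y
    rw [← mul_assoc, hg, ExteriorAlgebra.ι_sq_zero, zero_mul]
  have hgsq2 : ∀ (i : Fin 8), g i * g i = 0 := by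
    intro i; rw [hg, ExteriorAlgebra.ι_sq_zero]
  have hswap2 : ∀ (i j : Fin 8), i < j → g j * g i = -(g i * g j) := by
    intro i j _
    rw [hg, hg]
    exact eq_neg_of_add_eq_zero_left (by rw [add_comm]; exact ExteriorAlgebra.ι_add_mul_swap _ _)
  have hswap : ∀ (i j : Fin 8) (y : ExteriorAlgebra ℂ (Fin 8 → ℂ)), i < j →
      g j * (g i * y) = -(g i * (g j * y)) := by
    intro i j y h
    rw [← mul_assoc, ← mul_assoc, hswap2 i j h, neg_mul]
  have key : p (q (F' * F')) = (10 : ℂ) • (g 0 * (g 1 * (g 2 * (g 4 * (g 5 * g 6))))) := by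
    rw [hF]
    simp only [smul_mul_assoc, mul_smul_comm, smul_smul, mul_add, add_mul, mul_sub, sub_mul,
      map_add, map_smul, map_sub, mul_assoc, hq, hq0, hq1, hq2, hq3, hq4, hq5, hq6, hq7,
      zero_mul, mul_zero, smul_zero, zero_smul, zero_sub, sub_zero, zero_add, add_zero,
      neg_zero, mul_neg, neg_mul, smul_neg, neg_neg, map_neg, map_zero,
      hp, hp0, hp1, hp2, hp3, hp4, hp5, hp6, hp7]
    simp (disch := decide) only [hgsq, hgsq2, hswap, hswap2, mul_neg, neg_mul,
      smul_neg, neg_neg, mul_zero, zero_mul, smul_zero, add_zero, zero_add, neg_zero, smul_smul]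
    match_scalars
    any_goals ring
    all_goals simp [Complex.I_sq]
  rw [key, hg, hg, hg, hg, hg, hg]
  intro hzero
  have h1 := congrArg (ExteriorAlgebra.liftAlternating fFam) hzero
  rw [map_zero, map_smul] at h1
  rw [ExteriorAlgebra.liftAlternating_ι_mul, ExteriorAlgebra.liftAlternating_ι_mul,
    ExteriorAlgebra.liftAlternating_ι_mul, ExteriorAlgebra.liftAlternating_ι_mul,
    ExteriorAlgebra.liftAlternating_ι_mul, ExteriorAlgebra.liftAlternating_ι] at h1
  simp only [AlternatingMap.curryLeft_apply_apply] at h1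
  norm_num [fFam_six] at h1
  rw [Amap_val] at h1
  exact one_ne_zero h1
end

section
/- Let ω^1, ω^2, ω^3 be complex (1,0)-forms with dω^1 = dω^2 = 0 and dω^3 = A ω^{1̄2} + B ω^{2̄2} + C ω^{11̄} + D ω^{12̄} + E ω^{12}, where A,B,C,D,E ∈ ℂ. Let F = (i/2) Σ_{j=1}^3 ω^j ∧ ω̄^j. Then ∂∂̄F = 0 if and only if |A|^2 + |D|^2 + |E|^2 + 2Re(B̄C) = 0. -/
set_option maxHeartbeats 1000000

open ExteriorAlgebra

noncomputable def myProj : (Fin 6 → ℂ) →ₗ[ℂ] (Fin 4 → ℂ) :=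
  LinearMap.pi fun j => LinearMap.proj (![0,1,3,4] j)

noncomputable def myF4 : (Fin 6 → ℂ) [⋀^Fin 4]→ₗ[ℂ] ℂ :=
  (Matrix.detRowAlternating).compLinearMap myProj

noncomputable def myFam : ∀ i, (Fin 6 → ℂ) [⋀^Fin i]→ₗ[ℂ] ℂ :=
  fun i => if h : i = 4 then h ▸ myF4 else 0

lemma mono_ne :
    ExteriorAlgebra.ι ℂ ((Pi.single 0 1 : Fin 6 → ℂ)) *
      (ExteriorAlgebra.ι ℂ ((Pi.single 1 1 : Fin 6 → ℂ)) *
        (ExteriorAlgebra.ι ℂ ((Pi.single 3 1 : Fin 6 → ℂ)) *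
          ExteriorAlgebra.ι ℂ ((Pi.single 4 1 : Fin 6 → ℂ)))) ≠ 0 := by
  intro h
  have h2 := congrArg (liftAlternating (R := ℂ) myFam) h
  rw [map_zero] at h2
  have hm : ExteriorAlgebra.ι ℂ ((Pi.single 0 1 : Fin 6 → ℂ)) *
      (ExteriorAlgebra.ι ℂ ((Pi.single 1 1 : Fin 6 → ℂ)) *
        (ExteriorAlgebra.ι ℂ ((Pi.single 3 1 : Fin 6 → ℂ)) *
          ExteriorAlgebra.ι ℂ ((Pi.single 4 1 : Fin 6 → ℂ)))) =
      ιMulti ℂ 4 ![Pi.single 0 1, Pi.single 1 1, Pi.single 3 1, Pi.single 4 1] := by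
    rw [ιMulti_apply]
    simp [List.ofFn_succ, mul_assoc]
  rw [hm, liftAlternating_apply_ιMulti] at h2
  have : myFam 4 ![Pi.single 0 1, Pi.single 1 1, Pi.single 3 1, Pi.single 4 1] = 1 := by
    have : myFam 4 = myF4 := by simp [myFam]
    rw [this]
    show Matrix.detRowAlternating
      (myProj ∘ ![Pi.single 0 1, Pi.single 1 1, Pi.single 3 1, Pi.single 4 1]) = 1
    have hmat : (myProj ∘ ![Pi.single 0 1, Pi.single 1 1, Pi.single 3 1, Pi.single 4 1])
        = (1 : Matrix (Fin 4) (Fin 4) ℂ) := by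
      ext i j
      fin_cases i <;> fin_cases j <;>
        simp [myProj, Pi.single_apply, Matrix.one_apply]
    show Matrix.det _ = 1
    rw [hmat, Matrix.det_one]
  rw [this] at h2
  exact one_ne_zero h2

theorem statement9
    (A B C D E : ℂ)
    (w : Fin 6 → ExteriorAlgebra ℂ (Fin 6 → ℂ))
    (hw : ∀ i, w i = ExteriorAlgebra.ι ℂ (Pi.single i 1))
    (p q : ExteriorAlgebra ℂ (Fin 6 → ℂ) →ₗ[ℂ] ExteriorAlgebra ℂ (Fin 6 → ℂ))
    (hpLeib : ∀ i, ∀ y, p (w i * y) = p (w i) * y - w i * p y)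
    (hqLeib : ∀ i, ∀ y, q (w i * y) = q (w i) * y - w i * q y)
    (hp1 : p (w 0) = 0) (hp2 : p (w 1) = 0)
    (hp3 : p (w 2) = E • (w 0 * w 1))
    (hq1 : q (w 0) = 0) (hq2 : q (w 1) = 0)
    (hq3 : q (w 2) = A • (w 3 * w 1) + B • (w 4 * w 1) + C • (w 0 * w 3) + D • (w 0 * w 4))
    (hpb1 : p (w 3) = 0) (hpb2 : p (w 4) = 0)
    (hpb3 : p (w 5) = (starRingEnd ℂ) A • (w 0 * w 4) + (starRingEnd ℂ) B • (w 1 * w 4)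
      + (starRingEnd ℂ) C • (w 3 * w 0) + (starRingEnd ℂ) D • (w 3 * w 1))
    (hqb1 : q (w 3) = 0) (hqb2 : q (w 4) = 0)
    (hqb3 : q (w 5) = (starRingEnd ℂ) E • (w 3 * w 4))
    (F : ExteriorAlgebra ℂ (Fin 6 → ℂ))
    (hF : F = (Complex.I / 2) • (w 0 * w 3 + w 1 * w 4 + w 2 * w 5)) :
    p (q F) = 0 ↔
      Complex.normSq A + Complex.normSq D + Complex.normSq E
        + 2 * ((starRingEnd ℂ) B * C).re = 0 := by
  have sq' : ∀ i, w i * w i = 0 := fun i => by rw [hw]; exact ι_sq_zero _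
  have swp : ∀ i j : Fin 6, w i * w j = -(w j * w i) := fun i j => by
    rw [hw, hw]; exact eq_neg_of_add_eq_zero_left (ι_add_mul_swap _ _)
  have sw3 : ∀ (i j : Fin 6) (x : ExteriorAlgebra ℂ (Fin 6 → ℂ)),
      w i * (w j * x) = -(w j * (w i * x)) := fun i j x => by
    rw [← mul_assoc, swp, neg_mul, mul_assoc]
  have sq3 : ∀ (i : Fin 6) (x : ExteriorAlgebra ℂ (Fin 6 → ℂ)),
      w i * (w i * x) = 0 := fun i x => by rw [← mul_assoc, sq', zero_mul]
  have key : p (q F) = (Complex.I / 2 *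
      -(A * (starRingEnd ℂ) A + D * (starRingEnd ℂ) D + E * (starRingEnd ℂ) E
        + ((starRingEnd ℂ) B * C + B * (starRingEnd ℂ) C))) •
      (w 0 * (w 1 * (w 3 * w 4))) := by
    rw [hF, map_smul, map_smul]
    simp only [map_add, map_zero, hqLeib 0, hqLeib 1, hqLeib 2, hq1, hq2, hq3, hqb1, hqb2, hqb3]
    simp only [map_zero, zero_mul, mul_zero, zero_sub, sub_zero, zero_add, add_zero, neg_zero,
      map_neg, map_add, map_sub, map_smul, smul_mul_assoc, mul_smul_comm, add_mul, mul_assoc]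
    simp only [map_zero, hpLeib 0, hpLeib 1, hpLeib 2, hpLeib 3, hpLeib 4,
      hp1, hp2, hp3, hpb1, hpb2, hpb3,
      zero_mul, mul_zero, zero_sub, sub_zero, zero_add, add_zero, neg_zero,
      map_neg, map_add, map_sub, map_smul, smul_mul_assoc, mul_smul_comm, add_mul, mul_add,
      mul_assoc, smul_add, mul_neg, neg_mul, smul_neg, neg_neg, smul_smul]
    simp only [map_zero, sq3, sq', sw3 1 0, sw3 3 0, sw3 3 1, sw3 4 0, sw3 4 1, sw3 4 3,
      swp 1 0, swp 3 0, swp 3 1, swp 4 0, swp 4 1, swp 4 3,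
      mul_zero, zero_mul, smul_zero, neg_zero, add_zero, zero_add, mul_neg, neg_mul,
      smul_neg, neg_neg, mul_assoc]
    module
  rw [key, smul_eq_zero]
  have hmono : w 0 * (w 1 * (w 3 * w 4)) ≠ 0 := by
    rw [hw 0, hw 1, hw 3, hw 4]; exact mono_ne
  have hcoef : Complex.I / 2 *
      -(A * (starRingEnd ℂ) A + D * (starRingEnd ℂ) D + E * (starRingEnd ℂ) E
        + ((starRingEnd ℂ) B * C + B * (starRingEnd ℂ) C)) = 0 ↔
      Complex.normSq A + Complex.normSq D + Complex.normSq E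
        + 2 * ((starRingEnd ℂ) B * C).re = 0 := by
    rw [mul_eq_zero]
    have hI : (Complex.I / 2 : ℂ) ≠ 0 := by
      simp [Complex.I_ne_zero, div_eq_zero_iff]
    have hrw : A * (starRingEnd ℂ) A + D * (starRingEnd ℂ) D + E * (starRingEnd ℂ) E
        + ((starRingEnd ℂ) B * C + B * (starRingEnd ℂ) C)
        = ((Complex.normSq A + Complex.normSq D + Complex.normSq E
        + 2 * ((starRingEnd ℂ) B * C).re : ℝ) : ℂ) := by
      have h1 : B * (starRingEnd ℂ) C = (starRingEnd ℂ) ((starRingEnd ℂ) B * C) := by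
        rw [map_mul, Complex.conj_conj]
      rw [h1, Complex.add_conj]
      push_cast [Complex.mul_conj]
      ring
    constructor
    · rintro (h | h)
      · exact absurd h hI
      · rw [neg_eq_zero, hrw, Complex.ofReal_eq_zero] at h; exact h
    · intro h
      right
      rw [neg_eq_zero, hrw, Complex.ofReal_eq_zero]
      exact h
  tauto
end

section
/- Let ω^1, ω^2, ω^3 be (1,0)-forms with dω^1 = dω^2 = 0 and dω^3 = Y_ω + E ω^{12} with Y = [[A,B],[C,D]], i.e. Y_ω = Aω^{1̄2}+Bω^{2̄2}+Cω^{11̄}+Dω^{12̄}. Define η^1 = ω^1 + a ω̄^1 + b ω̄^2, η^2 = ω^2 + c ω̄^1 + f ω̄^2, η^3 = ω^3 + x ω̄^1 + y ω̄^2 + u ω̄^3, and set X = [[a,b],[c,f]]. Then dη^3 ∧ η^1 ∧ η^2 = 0 (the integrability condition) holds if and only if −(det X)E + (tr(X Ȳ) − Ē)u + tr(X · adj(Y)) = 0, where adj(Y) = [[D,−B],[−C,A]]. -/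
/-!
STATEMENT 10. With `dω¹ = dω² = 0`, `dω³ = Aω^{1̄2}+Bω^{2̄2}+Cω^{11̄}+Dω^{12̄}+Eω^{12}`
(and `dω̄³` its conjugate), set `η¹ = ω¹ + aω̄¹ + bω̄²`, `η² = ω² + cω̄¹ + fω̄²`,
`η³ = ω³ + xω̄¹ + yω̄² + uω̄³`, and `X = [[a,b],[c,f]]`, `Y = [[A,B],[C,D]]`.  Then the
integrability condition `dη³ ∧ η¹ ∧ η² = 0` holds iff
`−(det X)E + (tr(X Ȳ) − Ē)u + tr(X·adj(Y)) = 0`, with `adj(Y) = [[D,−B],[−C,A]]`.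

Model: exterior algebra on six generators `w 0, w 1, w 2 = ω¹, ω², ω³`,
`w 3, w 4, w 5 = ω̄¹, ω̄², ω̄³`; `d` is the ℂ-linear Chevalley–Eilenberg differential,
whose values on the generators are the structure equations (only linearity is needed).
-/


open ExteriorAlgebra in
noncomputable def myF : ∀ i : ℕ, (Fin 6 → ℂ) [⋀^Fin i]→ₗ[ℂ] ℂ
  | 4 => (Matrix.detRowAlternating : (Fin 4 → ℂ) [⋀^Fin 4]→ₗ[ℂ] ℂ).compLinearMap
      (LinearMap.funLeft ℂ ℂ ![0, 1, 3, 4])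
  | _ => 0

open ExteriorAlgebra in
lemma wedge_ne_zero :
    ι ℂ ((Pi.single 0 1 : Fin 6 → ℂ)) * (ι ℂ ((Pi.single 1 1 : Fin 6 → ℂ)) *
      (ι ℂ ((Pi.single 3 1 : Fin 6 → ℂ)) * ι ℂ ((Pi.single 4 1 : Fin 6 → ℂ)))) ≠ 0 := by
  intro h
  have h2 : ιMulti ℂ 4 ![(Pi.single 0 1 : Fin 6 → ℂ), (Pi.single 1 1 : Fin 6 → ℂ), (Pi.single 3 1 : Fin 6 → ℂ),
      (Pi.single 4 1 : Fin 6 → ℂ)] = 0 := by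
    rw [ιMulti_apply]
    simpa [List.ofFn_succ, mul_assoc] using h
  have h3 := congrArg (liftAlternating myF) h2
  rw [liftAlternating_apply_ιMulti, map_zero] at h3
  have h4 : myF 4 ![(Pi.single 0 1 : Fin 6 → ℂ), (Pi.single 1 1 : Fin 6 → ℂ), (Pi.single 3 1 : Fin 6 → ℂ),
      (Pi.single 4 1 : Fin 6 → ℂ)] = 1 := by
    have e : myF 4 = (Matrix.detRowAlternating : (Fin 4 → ℂ) [⋀^Fin 4]→ₗ[ℂ] ℂ).compLinearMap
        (LinearMap.funLeft ℂ ℂ ![0, 1, 3, 4]) := rfl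
    rw [e, AlternatingMap.compLinearMap_apply]
    have e2 : (fun i => (LinearMap.funLeft ℂ ℂ ![0, 1, 3, 4])
        (![(Pi.single 0 1 : Fin 6 → ℂ), (Pi.single 1 1 : Fin 6 → ℂ), (Pi.single 3 1 : Fin 6 → ℂ),
          (Pi.single 4 1 : Fin 6 → ℂ)] i)) = (fun i j => if i = j then (1:ℂ) else 0) := by
      funext i j
      fin_cases i <;> fin_cases j <;> simp [LinearMap.funLeft, Pi.single_apply]
    have e3 : (fun i j => if i = j then (1:ℂ) else 0) = (1 : Matrix (Fin 4) (Fin 4) ℂ) := by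
      ext i j; simp [Matrix.one_apply]
    rw [e2, e3]
    exact Matrix.det_one
  rw [h4] at h3
  exact one_ne_zero h3



set_option maxHeartbeats 2000000 in
theorem statement10
    (a b c f x y u A B C D E : ℂ)
    (w : Fin 6 → ExteriorAlgebra ℂ (Fin 6 → ℂ))
    (hw : ∀ i, w i = ExteriorAlgebra.ι ℂ (Pi.single i 1))
    (d : ExteriorAlgebra ℂ (Fin 6 → ℂ) →ₗ[ℂ] ExteriorAlgebra ℂ (Fin 6 → ℂ))
    (hd1 : d (w 0) = 0) (hd2 : d (w 1) = 0)
    (hd3 : d (w 2) = A • (w 3 * w 1) + B • (w 4 * w 1) + C • (w 0 * w 3)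
      + D • (w 0 * w 4) + E • (w 0 * w 1))
    (hdb1 : d (w 3) = 0) (hdb2 : d (w 4) = 0)
    (hdb3 : d (w 5) = (starRingEnd ℂ) A • (w 0 * w 4) + (starRingEnd ℂ) B • (w 1 * w 4)
      + (starRingEnd ℂ) C • (w 3 * w 0) + (starRingEnd ℂ) D • (w 3 * w 1)
      + (starRingEnd ℂ) E • (w 3 * w 4))
    (η₁ η₂ η₃ : ExteriorAlgebra ℂ (Fin 6 → ℂ))
    (hη₁ : η₁ = w 0 + a • w 3 + b • w 4)
    (hη₂ : η₂ = w 1 + c • w 3 + f • w 4)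
    (hη₃ : η₃ = w 2 + x • w 3 + y • w 4 + u • w 5)
    (X Y : Matrix (Fin 2) (Fin 2) ℂ)
    (hX : X = !![a, b; c, f]) (hY : Y = !![A, B; C, D]) :
    d η₃ * (η₁ * η₂) = 0 ↔
      -(X.det) * E + ((X * Y.map (starRingEnd ℂ)).trace - (starRingEnd ℂ) E) * u
        + (X * !![D, -B; -C, A]).trace = 0 := by
  subst hη₁ hη₂ hη₃ hX hY
  have hsq : ∀ i : Fin 6, w i * w i = 0 := fun i => by
    rw [hw i]; exact ExteriorAlgebra.ι_sq_zero _
  have hsw : ∀ i j : Fin 6, w j * w i = -(w i * w j) := fun i j => by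
    rw [hw i, hw j]
    exact eq_neg_of_add_eq_zero_left (ExteriorAlgebra.ι_add_mul_swap _ _)
  have nsw : ∀ (i j : Fin 6) (z : ExteriorAlgebra ℂ (Fin 6 → ℂ)),
      w j * (w i * z) = -(w i * (w j * z)) := fun i j z => by
    rw [← mul_assoc, hsw i j, neg_mul, mul_assoc]
  have nsq : ∀ (i : Fin 6) (z : ExteriorAlgebra ℂ (Fin 6 → ℂ)), w i * (w i * z) = 0 :=
    fun i z => by rw [← mul_assoc, hsq, zero_mul]
  have s10 := hsw 0 1
  have s30 := hsw 0 3
  have s40 := hsw 0 4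
  have s31 := hsw 1 3
  have s41 := hsw 1 4
  have s43 := hsw 3 4
  have n10 := nsw 0 1
  have n30 := nsw 0 3
  have n40 := nsw 0 4
  have n31 := nsw 1 3
  have n41 := nsw 1 4
  have n43 := nsw 3 4
  have q0 := hsq 0
  have q1 := hsq 1
  have q3 := hsq 3
  have q4 := hsq 4
  have nq0 := nsq 0
  have nq1 := nsq 1
  have nq3 := nsq 3
  have nq4 := nsq 4
  have key : d (w 2 + x • w 3 + y • w 4 + u • w 5) *
      ((w 0 + a • w 3 + b • w 4) * (w 1 + c • w 3 + f • w 4)) =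
      (-(-(a * f - b * c) * E
        + (a * (starRingEnd ℂ) A + b * (starRingEnd ℂ) C + c * (starRingEnd ℂ) B
            + f * (starRingEnd ℂ) D - (starRingEnd ℂ) E) * u
        + (a * D - b * C - c * B + f * A))) • (w 0 * (w 1 * (w 3 * w 4))) := by
    rw [map_add, map_add, map_add, map_smul, map_smul, map_smul, hd3, hdb1, hdb2, hdb3]
    simp only [smul_zero, add_zero, mul_add, add_mul, smul_mul_assoc, mul_smul_comm,
      mul_assoc, smul_smul, mul_neg, neg_mul, smul_neg, neg_neg,
      q0, q1, q3, q4, nq0, nq1, nq3, nq4,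
      s10, s30, s40, s31, s41, s43, n10, n30, n40, n31, n41, n43,
      mul_zero, zero_mul, smul_zero, zero_add, add_zero, neg_zero]
    module
  rw [key, smul_eq_zero]
  have hv : w 0 * (w 1 * (w 3 * w 4)) ≠ 0 := by
    rw [hw 0, hw 1, hw 3, hw 4]; exact wedge_ne_zero
  rw [or_iff_left hv]
  simp only [Matrix.det_fin_two_of, Matrix.trace_fin_two, Matrix.mul_apply,
    Fin.sum_univ_two, Matrix.map_apply, Matrix.of_apply, Matrix.cons_val', Matrix.cons_val_zero,
    Matrix.cons_val_one, Matrix.head_cons, Matrix.empty_val', Matrix.cons_val_fin_one,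
    Matrix.head_fin_const]
  constructor <;> intro h <;> linear_combination -h
end
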